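/- arXiv:2406.05104 — 3 statements merged into one kernel-verified Lean document; each statement's English description precedes it below -/
import Mathlib

section
/- Let S = {ν_m}_{m≥1} ⊂ (0,∞) be an increasing sequence whose counting function satisfies N_S(r) ≤ C̃ r^q for all r > 0, for constants C̃ > 0 and q > 0. Then there exists a constant Ĉ > 0, depending only on C̃ and q, such that Σ_{m : ν_m > γ} e^{−σ ν_m} ≤ Ĉ · (1 + (σγ)^q)/σ^q · e^{−σγ} for every σ > 0 and every γ > 0. -/
/-!
Group the terms of the tail according to `k = ⌊σ (ν_m - γ)⌋`. Each term of the `k`-th group is at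
most `e^{-σγ} e^{-k}`, and the group lies in `{m | ν_m ≤ γ + (k + 1)/σ}`, so it has at most
`C̃ (γ + (k + 1)/σ)^q ≤ C̃ 2^q (1 + (σγ)^q) σ^{-q} (k + 1)^q` elements. Summing over `k` gives the
bound with `Ĉ = C̃ 2^q ∑_k (k + 1)^q e^{-k}`.
-/

open Set Real
open scoped ENNReal

theorem ENNReal.tsum_le_tsum_encard_preimage_mul {α β : Type*} {f : α → ℝ≥0∞} (g : α → β)
    {c : β → ℝ≥0∞} (h : ∀ a, f a ≤ c (g a)) :
    ∑' a, f a ≤ ∑' b, (g ⁻¹' {b}).encard * c b := by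
  rw [← ENNReal.tsum_fiberwise f g]
  refine ENNReal.tsum_le_tsum fun b => ?_
  rw [← ENNReal.tsum_set_const]
  exact ENNReal.tsum_le_tsum fun a => (h a).trans_eq (congrArg c a.2)

theorem summable_and_tsum_le_of_tsum_ofReal_le {α : Type*} {f : α → ℝ} (hf : ∀ a, 0 ≤ f a)
    {B : ℝ} (hB : 0 ≤ B) (h : ∑' a, ENNReal.ofReal (f a) ≤ ENNReal.ofReal B) :
    Summable f ∧ ∑' a, f a ≤ B := by
  have hfin : ∑' a, ENNReal.ofReal (f a) ≠ ∞ := ne_top_of_le_ne_top ENNReal.ofReal_ne_top h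
  have htoReal : ∀ a, (ENNReal.ofReal (f a)).toReal = f a := fun a => ENNReal.toReal_ofReal (hf a)
  refine ⟨(ENNReal.summable_toReal hfin).congr htoReal, ?_⟩
  rw [← tsum_congr htoReal, ← ENNReal.tsum_toReal_eq fun _ => ENNReal.ofReal_ne_top]
  exact ENNReal.toReal_le_of_le_ofReal hB h

theorem Real.one_add_rpow_le {a q : ℝ} (ha : 0 ≤ a) (hq : 0 ≤ q) :
    (1 + a) ^ q ≤ 2 ^ q * (1 + a ^ q) := by
  have haq : 0 ≤ a ^ q := rpow_nonneg ha q
  rcases le_total a 1 with h | h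
  · calc (1 + a) ^ q ≤ 2 ^ q := by gcongr; linarith
      _ ≤ 2 ^ q * (1 + a ^ q) := le_mul_of_one_le_right (by positivity) (by linarith)
  · calc (1 + a) ^ q ≤ (2 * a) ^ q := by gcongr; linarith
      _ = 2 ^ q * a ^ q := mul_rpow zero_le_two ha
      _ ≤ 2 ^ q * (1 + a ^ q) := by gcongr; linarith

theorem Real.add_div_rpow_le {γ σ x q : ℝ} (hγ : 0 ≤ γ) (hσ : 0 < σ) (hx : 1 ≤ x) (hq : 0 ≤ q) :
    (γ + x / σ) ^ q ≤ 2 ^ q * ((1 + (σ * γ) ^ q) / σ ^ q) * x ^ q := by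
  have hσγ : 0 ≤ σ * γ := by positivity
  have hsplit : γ + x / σ = (σ * γ + x) / σ := by field_simp
  have hle : σ * γ + x ≤ (1 + σ * γ) * x := by nlinarith
  calc (γ + x / σ) ^ q = (σ * γ + x) ^ q / σ ^ q := by
        rw [hsplit, div_rpow (by positivity) hσ.le]
    _ ≤ (1 + σ * γ) ^ q * x ^ q / σ ^ q := by
        rw [← mul_rpow (by positivity) (by positivity)]
        gcongr
    _ ≤ 2 ^ q * (1 + (σ * γ) ^ q) * x ^ q / σ ^ q := by
        gcongr
        exact one_add_rpow_le hσγ hq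
    _ = 2 ^ q * ((1 + (σ * γ) ^ q) / σ ^ q) * x ^ q := by ring

theorem Real.summable_add_one_rpow_mul_exp_neg_nat (q : ℝ) :
    Summable fun k : ℕ => ((k : ℝ) + 1) ^ q * exp (-k) := by
  set n := ⌈q⌉₊
  have hshift := (summable_nat_add_iff 1).2 (summable_pow_mul_exp_neg_nat_mul n one_pos)
  refine (hshift.mul_left (exp 1)).of_nonneg_of_le (fun _ => by positivity) fun k => ?_
  have hk : (1 : ℝ) ≤ k + 1 := by linarith [k.cast_nonneg (α := ℝ)]
  calc ((k : ℝ) + 1) ^ q * exp (-k) ≤ ((k : ℝ) + 1) ^ (n : ℝ) * exp (-k) := by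
        gcongr
        exact Nat.le_ceil q
    _ = exp 1 * (((k + 1 : ℕ) : ℝ) ^ n * exp (-1 * ((k + 1 : ℕ) : ℝ))) := by
        rw [rpow_natCast, mul_left_comm, ← exp_add]
        push_cast
        ring_nf

section Counting

variable {ν : ℕ → ℝ} {C q : ℝ}

theorem StrictMono.ncard_setOf_le_apply (hν : StrictMono ν) (m : ℕ) :
    {k | ν k ≤ ν m}.ncard = m + 1 := by
  have : {k | ν k ≤ ν m} = Iic m := by ext k; simp [hν.le_iff_le]
  rw [this, ← Finset.coe_Iic, ncard_coe_finset, Nat.card_Iic]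

variable (hpos : ∀ m, 0 < ν m) (hmono : StrictMono ν) (hC : 0 ≤ C) (hq : 0 ≤ q)
  (hcount : ∀ r, 0 < r → ({m | ν m ≤ r}.ncard : ℝ) ≤ C * r ^ q)
include hpos hmono hC hq hcount

theorem finite_setOf_le_of_ncard_le (r : ℝ) : {m | ν m ≤ r}.Finite := by
  refine (finite_Iic ⌈C * r ^ q⌉₊).subset fun m (hm : ν m ≤ r) => ?_
  have h := hcount (ν m) (hpos m)
  rw [hmono.ncard_setOf_le_apply] at h
  have hm' : (m : ℝ) ≤ C * r ^ q := calc
    (m : ℝ) ≤ m + 1 := by linarith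
    _ ≤ C * ν m ^ q := by exact_mod_cast h
    _ ≤ C * r ^ q := by gcongr; exact (hpos m).le
  exact Nat.cast_le.mp (hm'.trans (Nat.le_ceil _))

theorem encard_setOf_le_le_ofReal {r : ℝ} (hr : 0 < r) :
    ({m | ν m ≤ r}.encard : ℝ≥0∞) ≤ ENNReal.ofReal (C * r ^ q) := by
  rw [← (finite_setOf_le_of_ncard_le hpos hmono hC hq hcount r).cast_ncard_eq, ENat.toENNReal_coe,
    ← ENNReal.ofReal_natCast]
  exact ENNReal.ofReal_le_ofReal (hcount r hr)

theorem tsum_ofReal_exp_neg_mul_le {σ γ : ℝ} (hσ : 0 < σ) (hγ : 0 ≤ γ) :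
    ∑' m : {m // γ < ν m}, ENNReal.ofReal (exp (-(σ * ν m))) ≤
      ENNReal.ofReal (C * 2 ^ q * (∑' k : ℕ, ((k : ℝ) + 1) ^ q * exp (-k)) *
        ((1 + (σ * γ) ^ q) / σ ^ q) * exp (-(σ * γ))) := by
  set K := C * 2 ^ q * ((1 + (σ * γ) ^ q) / σ ^ q) * exp (-(σ * γ))
  set g : {m // γ < ν m} → ℕ := fun m => ⌊σ * (ν m - γ)⌋₊
  have hterm : ∀ m : {m // γ < ν m}, ENNReal.ofReal (exp (-(σ * ν m))) ≤
      ENNReal.ofReal (exp (-(σ * γ)) * exp (-(g m : ℝ))) := by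
    intro m
    have : (g m : ℝ) ≤ σ * (ν m - γ) := Nat.floor_le (by nlinarith [m.2])
    rw [← exp_add]
    exact ENNReal.ofReal_le_ofReal (exp_le_exp.2 (by linarith))
  have hfiber : ∀ k : ℕ,
      ((g ⁻¹' {k}).encard : ℝ≥0∞) ≤ ENNReal.ofReal (C * (γ + (k + 1) / σ) ^ q) := by
    intro k
    refine le_trans ?_ (encard_setOf_le_le_ofReal hpos hmono hC hq hcount (by positivity))
    rw [← Subtype.val_injective.encard_image]
    refine ENat.toENNReal_le.2 (encard_le_encard ?_)
    rintro _ ⟨m, hm : ⌊σ * (ν m - γ)⌋₊ = k, rfl⟩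
    have : σ * (ν m - γ) < k + 1 := hm ▸ Nat.lt_floor_add_one _
    show ν m ≤ γ + (k + 1) / σ
    rw [← sub_le_iff_le_add', le_div_iff₀ hσ]
    linarith
  have hk : ∀ k : ℕ, C * (γ + (k + 1) / σ) ^ q * (exp (-(σ * γ)) * exp (-k)) ≤
      K * (((k : ℝ) + 1) ^ q * exp (-k)) := by
    intro k
    have := add_div_rpow_le hγ hσ (le_add_of_nonneg_left k.cast_nonneg) hq
    calc C * (γ + (k + 1) / σ) ^ q * (exp (-(σ * γ)) * exp (-k))
        ≤ C * (2 ^ q * ((1 + (σ * γ) ^ q) / σ ^ q) * ((k : ℝ) + 1) ^ q) *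
          (exp (-(σ * γ)) * exp (-k)) := by gcongr
      _ = K * (((k : ℝ) + 1) ^ q * exp (-k)) := by ring
  calc ∑' m : {m // γ < ν m}, ENNReal.ofReal (exp (-(σ * ν m)))
      ≤ ∑' k : ℕ, ((g ⁻¹' {k}).encard : ℝ≥0∞) * ENNReal.ofReal (exp (-(σ * γ)) * exp (-k)) :=
        ENNReal.tsum_le_tsum_encard_preimage_mul g hterm
    _ ≤ ∑' k : ℕ, ENNReal.ofReal (K * (((k : ℝ) + 1) ^ q * exp (-k))) := by
        refine ENNReal.tsum_le_tsum fun k => ?_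
        refine (mul_le_mul_left (hfiber k) _).trans ?_
        rw [← ENNReal.ofReal_mul (by positivity)]
        exact ENNReal.ofReal_le_ofReal (hk k)
    _ = ENNReal.ofReal (K * ∑' k : ℕ, ((k : ℝ) + 1) ^ q * exp (-k)) := by
        rw [← tsum_mul_left, ENNReal.ofReal_tsum_of_nonneg (fun _ => by positivity)
          ((summable_add_one_rpow_mul_exp_neg_nat q).mul_left K)]
    _ = _ := by congr 1; ring

end Counting

/-- Lemma `l1` of the paper: tail estimate for Dirichlet-type series
of a sequence with polynomially bounded counting function. -/
theorem statement7 (Ctil q : ℝ) (hC : 0 < Ctil) (hq : 0 < q) :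
    ∃ Chat : ℝ, 0 < Chat ∧
      ∀ ν : ℕ → ℝ, (∀ m, 0 < ν m) → StrictMono ν →
        (∀ r : ℝ, 0 < r → (({m : ℕ | ν m ≤ r}.ncard : ℝ)) ≤ Ctil * r ^ q) →
        ∀ σ γ : ℝ, 0 < σ → 0 < γ →
          Summable (fun m : {m : ℕ // γ < ν m} => Real.exp (-(σ * ν m.1))) ∧
          (∑' m : {m : ℕ // γ < ν m}, Real.exp (-(σ * ν m.1)))
            ≤ Chat * ((1 + (σ * γ) ^ q) / σ ^ q) * Real.exp (-(σ * γ)) := by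
  set D := ∑' k : ℕ, ((k : ℝ) + 1) ^ q * exp (-k)
  have hD : 0 < D :=
    (summable_add_one_rpow_mul_exp_neg_nat q).tsum_pos (fun _ => by positivity) 0 (by positivity)
  refine ⟨Ctil * 2 ^ q * D, by positivity, fun ν hpos hmono hcount σ γ hσ hγ => ?_⟩
  exact summable_and_tsum_le_of_tsum_ofReal_le (fun _ => (exp_pos _).le) (by positivity)
    (tsum_ofReal_exp_neg_mul_le hpos hmono hC.le hq.le hcount hσ hγ.le)
end

section
/- Let Ω ⊂ ℝ^d be a bounded domain, T > 0, {μ_m}_{m≥1} ⊂ (0,∞), and let {ψ_m}_{m≥1} be an orthonormal basis of L²(Ω); set F_m(t,x) := e^{−μ_m t} ψ_m(x) on Q_T := (0,T)×Ω. For every ε ∈ (0,T) there exists a family {f_m^ε}_{m≥1} ⊂ L²(Q_T) biorthogonal to {F_m}_{m≥1}, i.e. ∫∫_{Q_T} F_n(t,x) f_m^ε(t,x) dx dt = δ_{nm} for all n,m ≥ 1, such that f_m^ε(t,·) ≡ 0 for t ∈ (0,ε] and ‖f_m^ε‖²_{L²(Q_T)} ≤ 2e · (1/(T−ε) + μ_m)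 · e^{2ε μ_m} for every m ≥ 1. -/
/-! Take `f_m(t, x) = g_m(t) ψ_m(x)`, where `g_m` is `e^{-μ_m t}` cut off to `(ε, T)` and divided
by `∫_ε^T e^{-2μ_m t} dt`. Orthonormality of the `ψ_m` reduces biorthogonality to
`∫ e^{-μ_m t} g_m(t) dt = 1`, and
`‖f_m‖² = (∫_ε^T e^{-2μ_m t} dt)⁻¹ = 2μ_m e^{2εμ_m} / (1 - e^{-s})` with `s = 2μ_m (T - ε)`;
the inequality `1 - e^{-s} ≥ s / (1 + s)` bounds this by `(1 / (T - ε) + 2μ_m) e^{2εμ_m}`. -/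

open MeasureTheory Set

noncomputable section

open Real

theorem integral_Ioo_exp_neg_mul {a b c : ℝ} (hab : a ≤ b) (hc : c ≠ 0) :
    ∫ t in Ioo a b, exp (-(c * t)) = (exp (-(c * a)) - exp (-(c * b))) / c := by
  rw [integral_Ioc_eq_integral_Ioo.symm, ← intervalIntegral.integral_of_le hab,
    intervalIntegral.integral_comp_mul_left (fun y => exp (-y)) hc,
    intervalIntegral.integral_comp_neg, integral_exp]
  simp only [smul_eq_mul]
  field_simp

theorem div_one_add_le_one_sub_exp_neg {s : ℝ} (hs : 0 ≤ s) : s / (1 + s) ≤ 1 - exp (-s) := by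
  have h : exp (-s) ≤ 1 / (1 + s) := by
    rw [exp_neg, one_div]
    exact inv_anti₀ (by linarith) (by linarith [add_one_le_exp s])
  have : 1 - 1 / (1 + s) = s / (1 + s) := by field_simp; ring
  linarith

theorem MeasureTheory.MemLp.bounded_fst_mul_snd {α β : Type*}
    [MeasurableSpace α] [MeasurableSpace β] {μ : Measure α} [IsFiniteMeasure μ]
    {ν : Measure β} [SFinite ν] {p : ENNReal}
    {g : α → ℝ} {ψ : β → ℝ} (hg : Measurable g) {C : ℝ} (hgC : ∀ t, |g t| ≤ C)
    (hψ : MemLp ψ p ν) :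
    MemLp (fun z : α × β => g z.1 * ψ z.2) p (μ.prod ν) :=
  (hψ.comp_snd μ).mul' (memLp_top_of_bound (hg.comp measurable_fst).aestronglyMeasurable C
    (ae_of_all _ fun z => hgC z.1))

theorem integral_const_mul_mul_const_mul {α : Type*} [MeasurableSpace α] (μ : Measure α)
    (a b : ℝ) (f g : α → ℝ) :
    ∫ x, (a * f x) * (b * g x) ∂μ = a * b * ∫ x, f x * g x ∂μ := by
  rw [← integral_const_mul]
  congr 1 with x
  ring

namespace ExpBiorth

variable {a ε T : ℝ}

def normConst (a ε T : ℝ) : ℝ := (∫ t in Ioo ε T, exp (-(2 * a * t)))⁻¹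

def dual (a ε T : ℝ) : ℝ → ℝ := (Ioo ε T).indicator fun t => normConst a ε T * exp (-(a * t))

theorem normConst_eq (ha : 0 < a) (hεT : ε < T) :
    normConst a ε T = 2 * a / (exp (-(2 * a * ε)) - exp (-(2 * a * T))) := by
  rw [normConst, integral_Ioo_exp_neg_mul hεT.le (by positivity), inv_div]

theorem normConst_pos (ha : 0 < a) (hεT : ε < T) : 0 < normConst a ε T := by
  rw [normConst_eq ha hεT]
  have : exp (-(2 * a * T)) < exp (-(2 * a * ε)) := exp_lt_exp.mpr (by nlinarith)
  exact div_pos (by positivity) (by linarith)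

theorem normConst_le (ha : 0 < a) (hεT : ε < T) :
    normConst a ε T ≤ (1 / (T - ε) + 2 * a) * exp (2 * ε * a) := by
  set s := 2 * a * (T - ε) with hs_def
  have hs : 0 < s := by positivity
  have hfactor :
      exp (-(2 * a * ε)) - exp (-(2 * a * T)) = (exp (2 * ε * a))⁻¹ * (1 - exp (-s)) := by
    rw [← exp_neg, mul_sub, mul_one, ← exp_add, hs_def]
    ring_nf
  have hinv : (1 - exp (-s))⁻¹ ≤ (1 + s) / s := by
    rw [← inv_div]
    exact inv_anti₀ (by positivity) (div_one_add_le_one_sub_exp_neg hs.le)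
  have hrate : 1 / (T - ε) + 2 * a = 2 * a * ((1 + s) / s) := by
    have : T - ε ≠ 0 := (sub_pos.mpr hεT).ne'
    field_simp
    ring
  calc normConst a ε T = 2 * a * exp (2 * ε * a) * (1 - exp (-s))⁻¹ := by
        rw [normConst_eq ha hεT, hfactor]; field_simp
    _ ≤ 2 * a * exp (2 * ε * a) * ((1 + s) / s) := by gcongr
    _ = (1 / (T - ε) + 2 * a) * exp (2 * ε * a) := by rw [hrate]; ring

theorem measurable_dual : Measurable (dual a ε T) :=
  (by fun_prop : Measurable fun t => normConst a ε T * exp (-(a * t))).indicator measurableSet_Ioo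

theorem dual_of_le {t : ℝ} (ht : t ≤ ε) : dual a ε T t = 0 :=
  indicator_of_notMem (fun h => (not_lt.mpr ht) h.1) _

theorem abs_dual_le (ha : 0 < a) (hε : 0 ≤ ε) (hεT : ε < T) (t : ℝ) :
    |dual a ε T t| ≤ normConst a ε T := by
  have hc := normConst_pos ha hεT
  by_cases ht : t ∈ Ioo ε T
  · rw [dual, indicator_of_mem ht, abs_of_pos (by positivity)]
    exact mul_le_of_le_one_right hc.le (exp_le_one_iff.mpr (by nlinarith [ht.1]))
  · rw [dual, indicator_of_notMem ht, abs_zero]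
    exact hc.le

theorem setIntegral_Ioo_indicator_exp (hε : 0 ≤ ε) (k : ℝ) :
    ∫ t in Ioo 0 T, (Ioo ε T).indicator (fun t => k * exp (-(2 * a * t))) t
      = k / normConst a ε T := by
  rw [setIntegral_indicator measurableSet_Ioo,
    inter_eq_right.mpr (Ioo_subset_Ioo_left hε), integral_const_mul, normConst, div_inv_eq_mul]

theorem exp_mul_dual (t : ℝ) :
    exp (-(a * t)) * dual a ε T t
      = (Ioo ε T).indicator (fun t => normConst a ε T * exp (-(2 * a * t))) t := by
  by_cases ht : t ∈ Ioo ε T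
  · rw [dual, indicator_of_mem ht, indicator_of_mem ht, mul_left_comm, ← exp_add]
    ring_nf
  · rw [dual, indicator_of_notMem ht, indicator_of_notMem ht, mul_zero]

theorem dual_sq (t : ℝ) :
    dual a ε T t ^ 2
      = (Ioo ε T).indicator (fun t => normConst a ε T ^ 2 * exp (-(2 * a * t))) t := by
  by_cases ht : t ∈ Ioo ε T
  · rw [dual, indicator_of_mem ht, indicator_of_mem ht, mul_pow, ← exp_nat_mul]
    ring_nf
  · rw [dual, indicator_of_notMem ht, indicator_of_notMem ht, zero_pow two_ne_zero]

theorem integral_exp_mul_dual (ha : 0 < a) (hε : 0 ≤ ε) (hεT : ε < T) :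
    ∫ t in Ioo 0 T, exp (-(a * t)) * dual a ε T t = 1 := by
  simp_rw [exp_mul_dual]
  rw [setIntegral_Ioo_indicator_exp hε, div_self (normConst_pos ha hεT).ne']

theorem integral_dual_sq (ha : 0 < a) (hε : 0 ≤ ε) (hεT : ε < T) :
    ∫ t in Ioo 0 T, dual a ε T t ^ 2 = normConst a ε T := by
  simp_rw [dual_sq]
  rw [setIntegral_Ioo_indicator_exp hε, sq, mul_div_cancel_right₀ _ (normConst_pos ha hεT).ne']

end ExpBiorth

open ExpBiorth in
theorem statement14_general (d : ℕ)
    (Ω : Set (EuclideanSpace ℝ (Fin d)))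
    (T : ℝ)
    (μ : ℕ → ℝ) (hμ : ∀ m, 0 < μ m)
    (ψ : ℕ → EuclideanSpace ℝ (Fin d) → ℝ)
    (hψ_mem : ∀ m, MemLp (ψ m) 2 (volume.restrict Ω))
    (hψ_orth : ∀ m n, (∫ x in Ω, ψ m x * ψ n x) = if m = n then (1:ℝ) else 0)
    (ε : ℝ) (hε : ε ∈ Set.Ioo (0:ℝ) T) :
    ∃ f : ℕ → ℝ → EuclideanSpace ℝ (Fin d) → ℝ,
      (∀ m, MemLp (fun z : ℝ × EuclideanSpace ℝ (Fin d) => f m z.1 z.2) 2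
        (((volume : Measure ℝ).restrict (Set.Ioo 0 T)).prod
          ((volume : Measure (EuclideanSpace ℝ (Fin d))).restrict Ω))) ∧
      (∀ n m, (∫ t in Set.Ioo (0:ℝ) T, ∫ x in Ω,
          (Real.exp (-(μ n * t)) * ψ n x) * f m t x) = if n = m then (1:ℝ) else 0) ∧
      (∀ m, ∀ t ∈ Set.Ioc (0:ℝ) ε, ∀ x, f m t x = 0) ∧
      (∀ m, (∫ t in Set.Ioo (0:ℝ) T, ∫ x in Ω, (f m t x) ^ 2)
        ≤ 2 * Real.exp 1 * (1 / (T - ε) + μ m) * Real.exp (2 * ε * μ m)) := by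
  obtain ⟨hε0, hεT⟩ := hε
  refine ⟨fun m t x => dual (μ m) ε T t * ψ m x, fun m => ?_, fun n m => ?_,
    fun m t ht x => mul_eq_zero_of_left (dual_of_le ht.2) _, fun m => ?_⟩
  · have : IsFiniteMeasure ((volume : Measure ℝ).restrict (Ioo 0 T)) :=
      isFiniteMeasure_restrict.mpr measure_Ioo_lt_top.ne
    exact (hψ_mem m).bounded_fst_mul_snd measurable_dual (abs_dual_le (hμ m) hε0.le hεT)
  · simp_rw [integral_const_mul_mul_const_mul, hψ_orth]
    split_ifs with hnm
    · subst hnm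
      simp only [mul_one]
      exact integral_exp_mul_dual (hμ n) hε0.le hεT
    · simp
  · simp_rw [sq, integral_const_mul_mul_const_mul, hψ_orth, if_true, mul_one, ← sq,
      integral_dual_sq (hμ m) hε0.le hεT]
    calc normConst (μ m) ε T ≤ (1 / (T - ε) + 2 * μ m) * exp (2 * ε * μ m) :=
          normConst_le (hμ m) hεT
      _ ≤ 2 * exp 1 * (1 / (T - ε) + μ m) * exp (2 * ε * μ m) := by
          have : 0 < 1 / (T - ε) := one_div_pos.mpr (sub_pos.mpr hεT)
          have := hμ m
          gcongr
          nlinarith [add_one_le_exp (1 : ℝ)]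

/-- Proposition `Prop_epsLR` of the paper: a biorthogonal family to
`F_m(t,x) = e^{-μ_m t} ψ_m(x)` in `L²(Q_T)` supported in `[ε,T] × Ω`. -/
theorem statement14 (d : ℕ) (hd : 1 ≤ d)
    (Ω : Set (EuclideanSpace ℝ (Fin d)))
    (hΩ_open : IsOpen Ω) (hΩ_conn : IsConnected Ω) (hΩ_bdd : Bornology.IsBounded Ω)
    (T : ℝ) (hT : 0 < T)
    (μ : ℕ → ℝ) (hμ : ∀ m, 0 < μ m)
    (ψ : ℕ → EuclideanSpace ℝ (Fin d) → ℝ)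
    (hψ_mem : ∀ m, MemLp (ψ m) 2 (volume.restrict Ω))
    (hψ_orth : ∀ m n, (∫ x in Ω, ψ m x * ψ n x) = if m = n then (1:ℝ) else 0)
    (hψ_complete : ∀ f : EuclideanSpace ℝ (Fin d) → ℝ, MemLp f 2 (volume.restrict Ω) →
      (∀ m, (∫ x in Ω, f x * ψ m x) = 0) → f =ᵐ[volume.restrict Ω] 0)
    (ε : ℝ) (hε : ε ∈ Set.Ioo (0:ℝ) T) :
    ∃ f : ℕ → ℝ → EuclideanSpace ℝ (Fin d) → ℝ,
      (∀ m, MemLp (fun z : ℝ × EuclideanSpace ℝ (Fin d) => f m z.1 z.2) 2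
        (((volume : Measure ℝ).restrict (Set.Ioo 0 T)).prod
          ((volume : Measure (EuclideanSpace ℝ (Fin d))).restrict Ω))) ∧
      (∀ n m, (∫ t in Set.Ioo (0:ℝ) T, ∫ x in Ω,
          (Real.exp (-(μ n * t)) * ψ n x) * f m t x) = if n = m then (1:ℝ) else 0) ∧
      (∀ m, ∀ t ∈ Set.Ioc (0:ℝ) ε, ∀ x, f m t x = 0) ∧
      (∀ m, (∫ t in Set.Ioo (0:ℝ) T, ∫ x in Ω, (f m t x) ^ 2)
        ≤ 2 * Real.exp 1 * (1 / (T - ε) + μ m) * Real.exp (2 * ε * μ m)) :=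
  statement14_general d Ω T μ hμ ψ hψ_mem hψ_orth ε hε
end
end

section
/- Under the Lebeau–Robbiano hypotheses (counting estimate with exponent θ₁ = d/2 and spectral inequality with constant β), there exists a constant Ĉ > 0, depending only on θ₁, such that for every T > 0, every α > 2β, every N ≥ 1 and every P_N, ∫∫_{Q_T} e^{−αβ/t} |P_N(t,x)|² dx dt ≤ 3 ‖P_N‖²_{L²((0,T)×ω)} + M(α,T) · ∫∫_{Q_T} e^{−αβ/t} |P_N(t,x)|² dx dt, where M(α,T) := Ĉ · χ(T,α) · (α² − 2αβ)^{−(2θ₁+1)} · e^{−(α² − 2αβ)/(2T)} and χ(T,α) := (1/T + 1) · [T^{θ₁+1}(1 + T^{θ₁+1}) + α^{2θ₁+2}]. -/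
/-!
At each time `t`, split `P_N(t)` at frequency `α / t`. The spectral inequality bounds the
low-frequency part on `Ω` by `e^{αβ/t}` times its norm on `ω`, which the weight `e^{-αβ/t}` cancels,
and on `ω` the low part is controlled by `P_N` itself and the high part. A high mode,
`√μ_m > α / t`, has `μ_m t > α² / t`, so its energy at time `t` is at most
`e^{-(α² - 2αβ)/T}` times its weighted energy at time `t / 2`. Integrating over `(0, T)`, the
rescaling `t ↦ t / 2` costs a factor `2`, and `x^{d+1} ≤ (d+1)! e^x` at `x = (α² - 2αβ)/(2T)`
turns `5 e^{-(α² - 2αβ)/T}` into the stated factor `M(α, T)`.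
-/

open MeasureTheory Set Filter

noncomputable section

/-- The Lebeau–Robbiano hypotheses: `Ω` is a bounded domain, `ω ⊆ Ω` is open and non-empty,
`{ψ_m}` is an orthonormal basis of `L²(Ω)`, the counting function of `{μ_m}` is bounded by
`κ₁ r^{θ₁}`, and the spectral inequality holds with constant `β`. -/
structure LRHyp {E : Type} [NormedAddCommGroup E] [MeasureSpace E]
    (Ω ω : Set E) (μ : ℕ → ℝ) (ψ : ℕ → E → ℝ) (κ₁ θ₁ β : ℝ) : Prop where
  hΩ_open : IsOpen Ω
  hΩ_conn : IsConnected Ω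
  hΩ_bdd : Bornology.IsBounded Ω
  hω_open : IsOpen ω
  hω_ne : ω.Nonempty
  hω_sub : ω ⊆ Ω
  hμ_pos : ∀ m, 0 < μ m
  hκ₁ : 0 < κ₁
  hβ : 0 < β
  hcount : ∀ r : ℝ, 0 < r → (({m : ℕ | μ m ≤ r}.ncard : ℝ)) ≤ κ₁ * r ^ θ₁
  hfin : ∀ r : ℝ, {m : ℕ | Real.sqrt (μ m) ≤ r}.Finite
  hψ_mem : ∀ m, MemLp (ψ m) 2 (volume.restrict Ω)
  hψ_orth : ∀ m n, (∫ x in Ω, ψ m x * ψ n x) = if m = n then (1:ℝ) else 0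
  hψ_complete : ∀ f : E → ℝ, MemLp f 2 (volume.restrict Ω) →
    (∀ m, (∫ x in Ω, f x * ψ m x) = 0) → f =ᵐ[volume.restrict Ω] 0
  hspec : ∀ Λ : ℝ, 0 < Λ → ∀ b : ℕ → ℝ,
    (∫ x in Ω, (∑ m ∈ (hfin Λ).toFinset, b m * ψ m x) ^ 2)
      ≤ Real.exp (β * Λ) * ∫ x in ω, (∑ m ∈ (hfin Λ).toFinset, b m * ψ m x) ^ 2

/-- The finite combinations `P_N(t,x) = Σ_{√μ_m ≤ N} a_m e^{-μ_m t} ψ_m(x)`. -/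
def PNLR {E : Type} (μ : ℕ → ℝ) (ψ : ℕ → E → ℝ)
    (hfin : ∀ r : ℝ, {m : ℕ | Real.sqrt (μ m) ≤ r}.Finite)
    (N : ℕ) (a : ℕ → ℝ) (t : ℝ) (x : E) : ℝ :=
  ∑ m ∈ (hfin (N : ℝ)).toFinset, a m * Real.exp (-(μ m * t)) * ψ m x

open Real

section Orthonormal

variable {X : Type*} [MeasurableSpace X] {ν : Measure X} {ψ : ℕ → X → ℝ}

theorem integral_sq_finset_sum (hψ : ∀ k, MemLp (ψ k) 2 ν) (S : Finset ℕ) (c : ℕ → ℝ) :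
    ∫ x, (∑ k ∈ S, c k * ψ k x) ^ 2 ∂ν
      = ∑ k ∈ S, ∑ l ∈ S, c k * c l * ∫ x, ψ k x * ψ l x ∂ν := by
  have hint : ∀ k l, Integrable (fun x => c k * c l * (ψ k x * ψ l x)) ν := fun k l =>
    ((hψ k).integrable_mul (hψ l)).const_mul _
  calc ∫ x, (∑ k ∈ S, c k * ψ k x) ^ 2 ∂ν
      = ∫ x, ∑ k ∈ S, ∑ l ∈ S, c k * c l * (ψ k x * ψ l x) ∂ν := by
        congr 1; ext x
        rw [sq, Finset.sum_mul_sum]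
        exact Finset.sum_congr rfl fun k _ => Finset.sum_congr rfl fun l _ => by ring
    _ = ∑ k ∈ S, ∑ l ∈ S, c k * c l * ∫ x, ψ k x * ψ l x ∂ν := by
        rw [integral_finsetSum S fun k _ => integrable_finsetSum S fun l _ => hint k l]
        refine Finset.sum_congr rfl fun k _ => ?_
        rw [integral_finsetSum S fun l _ => hint k l]
        exact Finset.sum_congr rfl fun l _ => integral_const_mul _ _

theorem integral_sq_finset_sum_of_orthonormal (hψ : ∀ k, MemLp (ψ k) 2 ν)
    (horth : ∀ k l, ∫ x, ψ k x * ψ l x ∂ν = if k = l then 1 else 0)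
    (S : Finset ℕ) (c : ℕ → ℝ) :
    ∫ x, (∑ k ∈ S, c k * ψ k x) ^ 2 ∂ν = ∑ k ∈ S, c k ^ 2 := by
  rw [integral_sq_finset_sum hψ]
  simp only [horth, mul_ite, mul_one, mul_zero, Finset.sum_ite_eq, Finset.sum_ite_mem,
    Finset.inter_self, sq]

end Orthonormal

-- `PNLR μ ψ hfin N a` is `heatSum (hfin N).toFinset a μ ψ` by definition.
def heatSum {X : Type*} (S : Finset ℕ) (a μ : ℕ → ℝ) (ψ : ℕ → X → ℝ) (t : ℝ) (x : X) : ℝ :=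
  ∑ m ∈ S, a m * exp (-(μ m * t)) * ψ m x

section HeatSum

variable {X : Type*} [MeasurableSpace X] {ν : Measure X} {ψ : ℕ → X → ℝ}
  (S : Finset ℕ) (a μ : ℕ → ℝ)

theorem integral_heatSum_sq_of_orthonormal (hψ : ∀ k, MemLp (ψ k) 2 ν)
    (horth : ∀ k l, ∫ x, ψ k x * ψ l x ∂ν = if k = l then 1 else 0) (t : ℝ) :
    ∫ x, heatSum S a μ ψ t x ^ 2 ∂ν = ∑ m ∈ S, (a m * exp (-(μ m * t))) ^ 2 :=
  integral_sq_finset_sum_of_orthonormal hψ horth S _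

theorem continuous_integral_heatSum_sq (hψ : ∀ k, MemLp (ψ k) 2 ν) :
    Continuous fun t => ∫ x, heatSum S a μ ψ t x ^ 2 ∂ν := by
  simp only [heatSum, integral_sq_finset_sum hψ]
  fun_prop

end HeatSum

section TimeIntegral

variable {F G : ℝ → ℝ} {T : ℝ}

theorem integrableOn_exp_neg_div_mul {A : ℝ} (hA : 0 ≤ A) {g : ℝ → ℝ} (hg : Continuous g) :
    IntegrableOn (fun t => exp (-A / t) * g t) (Ioo 0 T) := by
  refine Integrable.bdd_mul (c := 1) (hg.integrableOn_Icc.mono_set Ioo_subset_Icc_self)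
    (by fun_prop) ?_
  refine (ae_restrict_iff' measurableSet_Ioo).mpr (Eventually.of_forall fun t ht => ?_)
  rw [norm_of_nonneg (exp_pos _).le, exp_le_one_iff, neg_div]
  exact neg_nonpos.mpr (div_nonneg hA ht.1.le)

theorem integrableOn_Ioo_comp_div_two (hF : IntegrableOn F (Ioo 0 T)) :
    IntegrableOn (fun t => F (t / 2)) (Ioo 0 T) := by
  rw [← integrable_indicator_iff measurableSet_Ioo] at hF
  refine ((hF.comp_div two_ne_zero).integrableOn).congr_fun (fun t ht => ?_) measurableSet_Ioo
  have hhalf : t / 2 ∈ Ioo 0 T := ⟨by linarith [ht.1], by linarith [ht.1, ht.2]⟩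
  exact indicator_of_mem hhalf F

theorem setIntegral_comp_div_two_le (hT : 0 ≤ T) (hF : IntegrableOn F (Ioo 0 T))
    (hF0 : ∀ t ∈ Ioo 0 T, 0 ≤ F t) :
    ∫ t in Ioo 0 T, F (t / 2) ≤ 2 * ∫ t in Ioo 0 T, F t := by
  have hrescale : ∫ t in Ioo 0 T, F (t / 2) = 2 * ∫ t in Ioo 0 (T / 2), F t := by
    rw [← integral_Ioc_eq_integral_Ioo, ← intervalIntegral.integral_of_le hT,
      intervalIntegral.integral_comp_div F two_ne_zero, zero_div,
      intervalIntegral.integral_of_le (by linarith), integral_Ioc_eq_integral_Ioo, smul_eq_mul]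
  rw [hrescale]
  refine mul_le_mul_of_nonneg_left ?_ zero_le_two
  exact setIntegral_mono_set hF ((ae_restrict_iff' measurableSet_Ioo).mpr
    (Eventually.of_forall hF0)) (Ioo_subset_Ioo_right (by linarith : T / 2 ≤ T)).eventuallyLE

theorem setIntegral_le_of_le_add_comp_div_two {c K : ℝ} (hT : 0 ≤ T) (hK : 0 ≤ K)
    (hF : IntegrableOn F (Ioo 0 T)) (hG : IntegrableOn G (Ioo 0 T))
    (hF0 : ∀ t ∈ Ioo 0 T, 0 ≤ F t) (h : ∀ t ∈ Ioo 0 T, F t ≤ c * G t + K * F (t / 2)) :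
    ∫ t in Ioo 0 T, F t ≤ c * (∫ t in Ioo 0 T, G t) + 2 * K * ∫ t in Ioo 0 T, F t := by
  have hF2 := integrableOn_Ioo_comp_div_two hF
  calc ∫ t in Ioo 0 T, F t ≤ ∫ t in Ioo 0 T, (c * G t + K * F (t / 2)) :=
        setIntegral_mono_on hF ((hG.const_mul c).add (hF2.const_mul K)) measurableSet_Ioo h
    _ = c * (∫ t in Ioo 0 T, G t) + K * ∫ t in Ioo 0 T, F (t / 2) := by
        rw [integral_add (hG.const_mul c) (hF2.const_mul K), integral_const_mul,
          integral_const_mul]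
    _ ≤ c * (∫ t in Ioo 0 T, G t) + 2 * K * ∫ t in Ioo 0 T, F t := by
        have := mul_le_mul_of_nonneg_left (setIntegral_comp_div_two_le hT hF hF0) hK
        linarith

end TimeIntegral

theorem sq_mul_exp_le_of_lt_sqrt {a μ α β t T : ℝ} (hα : 0 ≤ α) (ht : 0 < t) (htT : t ≤ T)
    (hs : 0 ≤ α ^ 2 - 2 * α * β) (hμ : α / t < √μ) :
    (a * exp (-(μ * t))) ^ 2
      ≤ exp (-(α ^ 2 - 2 * α * β) / T)
        * (exp (-(α * β) / (t / 2)) * (a * exp (-(μ * (t / 2)))) ^ 2) := by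
  have hμt : α ^ 2 / t < μ * t := by
    have := (Real.lt_sqrt (div_nonneg hα ht.le)).mp hμ
    rw [div_pow, div_lt_iff₀ (by positivity)] at this
    rw [div_lt_iff₀ ht]; nlinarith
  have hsT : (α ^ 2 - 2 * α * β) / T ≤ (α ^ 2 - 2 * α * β) / t :=
    div_le_div_of_nonneg_left hs ht htT
  have hexp : -(μ * t) - μ * t
      ≤ -(α ^ 2 - 2 * α * β) / T + (-(α * β) / (t / 2) + (-(μ * (t / 2)) - μ * (t / 2))) := by
    have : (α ^ 2 - 2 * α * β) / t + α * β / (t / 2) = α ^ 2 / t := by field_simp; ring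
    rw [neg_div, neg_div]; linarith
  calc (a * exp (-(μ * t))) ^ 2 = a ^ 2 * exp (-(μ * t) - μ * t) := by
        rw [exp_sub, exp_neg]; field_simp
    _ ≤ a ^ 2 * exp (-(α ^ 2 - 2 * α * β) / T
          + (-(α * β) / (t / 2) + (-(μ * (t / 2)) - μ * (t / 2)))) := by
        gcongr
    _ = _ := by simp only [exp_add, exp_sub, exp_neg]; field_simp

theorem exp_neg_div_le_mul_exp_neg_div_two {s T : ℝ} (hs : 0 < s) (hT : 0 < T) (n : ℕ) :
    exp (-s / T) ≤ 2 ^ n * (n.factorial : ℝ) * T ^ n / s ^ n * exp (-s / (2 * T)) := by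
  have hpow := pow_div_factorial_le_exp (s / (2 * T)) (by positivity) n
  rw [div_pow, div_div, div_le_iff₀ (by positivity)] at hpow
  have hexp : exp (-s / T) * exp (s / (2 * T)) = exp (-s / (2 * T)) := by
    rw [← exp_add]; congr 1; field_simp; ring
  rw [div_mul_eq_mul_div, le_div_iff₀ (by positivity)]
  calc exp (-s / T) * s ^ n
        ≤ exp (-s / T) * (exp (s / (2 * T)) * ((2 * T) ^ n * (n.factorial : ℝ))) := by
        gcongr
    _ = 2 ^ n * (n.factorial : ℝ) * T ^ n * exp (-s / (2 * T)) := by rw [← hexp, mul_pow]; ring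

theorem rpow_two_mul_add_one_le {T θ α : ℝ} (hT : 0 < T) (hα : 0 ≤ α) :
    T ^ (2 * θ + 1) ≤ (1 / T + 1) * (T ^ (θ + 1) * (1 + T ^ (θ + 1)) + α ^ (2 * θ + 2)) := by
  rw [show 2 * θ + 1 = (θ + 1) + (θ + 1) - 1 by ring, rpow_sub_one hT.ne', rpow_add hT,
    div_eq_mul_one_div, mul_comm]
  have hTθ : 0 < T ^ (θ + 1) := rpow_pos_of_pos hT _
  have hα' : 0 ≤ α ^ (2 * θ + 2) := rpow_nonneg hα _
  gcongr
  · linarith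
  · nlinarith

section Spectral

variable {X : Type*} [MeasurableSpace X] {ν : Measure X} {Ω ω : Set X} {μ : ℕ → ℝ}
  {ψ : ℕ → X → ℝ} {β : ℝ}

theorem spectral_ineq_of_subset (hfin : ∀ r : ℝ, {m : ℕ | √(μ m) ≤ r}.Finite)
    (hspec : ∀ Λ : ℝ, 0 < Λ → ∀ b : ℕ → ℝ,
      ∫ x in Ω, (∑ m ∈ (hfin Λ).toFinset, b m * ψ m x) ^ 2 ∂ν
        ≤ exp (β * Λ) * ∫ x in ω, (∑ m ∈ (hfin Λ).toFinset, b m * ψ m x) ^ 2 ∂ν)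
    {Λ : ℝ} (hΛ : 0 < Λ) (L : Finset ℕ) (hL : ∀ m ∈ L, √(μ m) ≤ Λ) (c : ℕ → ℝ) :
    ∫ x in Ω, (∑ m ∈ L, c m * ψ m x) ^ 2 ∂ν
      ≤ exp (β * Λ) * ∫ x in ω, (∑ m ∈ L, c m * ψ m x) ^ 2 ∂ν := by
  have hsum : ∀ x, ∑ m ∈ (hfin Λ).toFinset, (if m ∈ L then c m else 0) * ψ m x
      = ∑ m ∈ L, c m * ψ m x := fun x => by
    have hsub : L ⊆ (hfin Λ).toFinset := fun m hm => by simpa using hL m hm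
    simp only [ite_mul, zero_mul, Finset.sum_ite_mem, Finset.inter_eq_right.mpr hsub]
  simpa only [hsum] using hspec Λ hΛ fun m => if m ∈ L then c m else 0

theorem exp_mul_sum_sq_le_of_spectral (hω : ω ⊆ Ω) (hψ : ∀ k, MemLp (ψ k) 2 (ν.restrict Ω))
    (horth : ∀ k l, ∫ x in Ω, ψ k x * ψ l x ∂ν = if k = l then 1 else 0)
    {Λ : ℝ} (hβΛ : 0 ≤ β * Λ)
    (hspec : ∀ L : Finset ℕ, (∀ m ∈ L, √(μ m) ≤ Λ) → ∀ c : ℕ → ℝ,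
      ∫ x in Ω, (∑ m ∈ L, c m * ψ m x) ^ 2 ∂ν
        ≤ exp (β * Λ) * ∫ x in ω, (∑ m ∈ L, c m * ψ m x) ^ 2 ∂ν)
    (S : Finset ℕ) (c : ℕ → ℝ) :
    exp (-(β * Λ)) * ∑ m ∈ S, c m ^ 2
      ≤ 3 * ∫ x in ω, (∑ m ∈ S, c m * ψ m x) ^ 2 ∂ν
        + 5 / 2 * ∑ m ∈ S.filter (fun m => Λ < √(μ m)), c m ^ 2 := by
  set H := S.filter (fun m => Λ < √(μ m))
  set L := S.filter (fun m => ¬ Λ < √(μ m))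
  set P := fun (F : Finset ℕ) x => ∑ m ∈ F, c m * ψ m x
  have hψω : ∀ k, MemLp (ψ k) 2 (ν.restrict ω) := fun k =>
    (hψ k).mono_measure (Measure.restrict_mono hω le_rfl)
  have hint : ∀ F, Integrable (fun x => P F x ^ 2) (ν.restrict ω) := fun F =>
    (memLp_finsetSum F fun m _ => (hψω m).const_mul (c m)).integrable_sq
  have hsplit : ∀ x, P S x = P H x + P L x := fun x =>
    (Finset.sum_filter_add_sum_filter_not S _ _).symm
  have hlow : exp (-(β * Λ)) * ∑ m ∈ L, c m ^ 2 ≤ ∫ x in ω, P L x ^ 2 ∂ν := by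
    rw [← integral_sq_finset_sum_of_orthonormal hψ horth, ← le_div_iff₀' (exp_pos _),
      exp_neg, div_inv_eq_mul, mul_comm]
    exact hspec L (fun m hm => not_lt.mp (Finset.mem_filter.mp hm).2) c
  have hhigh : ∫ x in ω, P H x ^ 2 ∂ν ≤ ∑ m ∈ H, c m ^ 2 := by
    rw [← integral_sq_finset_sum_of_orthonormal hψ horth]
    exact setIntegral_mono_set
      (memLp_finsetSum H fun m _ => (hψ m).const_mul (c m)).integrable_sq
      (Eventually.of_forall fun x => sq_nonneg _) hω.eventuallyLE
  -- `(u - v)² ≤ 3u² + (3/2)v²` with `u = P S`, `v = P H`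
  have hlowω : ∫ x in ω, P L x ^ 2 ∂ν
      ≤ 3 * ∫ x in ω, P S x ^ 2 ∂ν + 3 / 2 * ∫ x in ω, P H x ^ 2 ∂ν := by
    rw [← integral_const_mul, ← integral_const_mul,
      ← integral_add ((hint S).const_mul 3) ((hint H).const_mul _)]
    refine integral_mono (hint L) (((hint S).const_mul 3).add ((hint H).const_mul _))
      fun x => ?_
    rw [show P L x = P S x - P H x by linarith [hsplit x]]
    nlinarith [sq_nonneg (P S x + P H x / 2)]
  have hweight : exp (-(β * Λ)) ≤ 1 := exp_le_one_iff.mpr (neg_nonpos.mpr hβΛ)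
  have hH0 : 0 ≤ ∑ m ∈ H, c m ^ 2 := Finset.sum_nonneg fun m _ => sq_nonneg _
  rw [← Finset.sum_filter_add_sum_filter_not S (fun m => Λ < √(μ m)), mul_add]
  nlinarith

theorem integral_weighted_heatSum_sq_le (hω : ω ⊆ Ω)
    (hψ : ∀ k, MemLp (ψ k) 2 (ν.restrict Ω))
    (horth : ∀ k l, ∫ x in Ω, ψ k x * ψ l x ∂ν = if k = l then 1 else 0)
    (hfin : ∀ r : ℝ, {m : ℕ | √(μ m) ≤ r}.Finite)
    (hspec : ∀ Λ : ℝ, 0 < Λ → ∀ b : ℕ → ℝ,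
      ∫ x in Ω, (∑ m ∈ (hfin Λ).toFinset, b m * ψ m x) ^ 2 ∂ν
        ≤ exp (β * Λ) * ∫ x in ω, (∑ m ∈ (hfin Λ).toFinset, b m * ψ m x) ^ 2 ∂ν)
    (hβ : 0 < β) {α T t : ℝ} (hα : 2 * β < α) (ht : 0 < t) (htT : t ≤ T)
    (S : Finset ℕ) (a : ℕ → ℝ) :
    ∫ x in Ω, exp (-(α * β) / t) * heatSum S a μ ψ t x ^ 2 ∂ν
      ≤ 3 * ∫ x in ω, heatSum S a μ ψ t x ^ 2 ∂ν
        + 5 / 2 * exp (-(α ^ 2 - 2 * α * β) / T)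
          * ∫ x in Ω, exp (-(α * β) / (t / 2)) * heatSum S a μ ψ (t / 2) x ^ 2 ∂ν := by
  have hα0 : 0 < α := by linarith
  have hs : 0 ≤ α ^ 2 - 2 * α * β := by nlinarith
  rw [integral_const_mul, integral_const_mul, integral_heatSum_sq_of_orthonormal S a μ hψ horth,
    integral_heatSum_sq_of_orthonormal S a μ hψ horth]
  have hsplit := exp_mul_sum_sq_le_of_spectral hω hψ horth (Λ := α / t) (by positivity)
    (spectral_ineq_of_subset hfin hspec (by positivity)) S fun m => a m * exp (-(μ m * t))
  rw [show -(β * (α / t)) = -(α * β) / t by ring] at hsplit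
  have hhigh : ∑ m ∈ S.filter (fun m => α / t < √(μ m)), (a m * exp (-(μ m * t))) ^ 2
      ≤ exp (-(α ^ 2 - 2 * α * β) / T)
        * (exp (-(α * β) / (t / 2)) * ∑ m ∈ S, (a m * exp (-(μ m * (t / 2)))) ^ 2) := by
    rw [Finset.mul_sum, Finset.mul_sum]
    refine (Finset.sum_le_sum fun m hm => ?_).trans
      (Finset.sum_le_sum_of_subset_of_nonneg (Finset.filter_subset _ S)
        fun m _ _ => by positivity)
    exact sq_mul_exp_le_of_lt_sqrt hα0.le ht htT hs (Finset.mem_filter.mp hm).2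
  exact hsplit.trans (by unfold heatSum; linarith)

theorem setIntegral_weighted_heatSum_sq_le (hω : ω ⊆ Ω)
    (hψ : ∀ k, MemLp (ψ k) 2 (ν.restrict Ω))
    (horth : ∀ k l, ∫ x in Ω, ψ k x * ψ l x ∂ν = if k = l then 1 else 0)
    (hfin : ∀ r : ℝ, {m : ℕ | √(μ m) ≤ r}.Finite)
    (hspec : ∀ Λ : ℝ, 0 < Λ → ∀ b : ℕ → ℝ,
      ∫ x in Ω, (∑ m ∈ (hfin Λ).toFinset, b m * ψ m x) ^ 2 ∂ν
        ≤ exp (β * Λ) * ∫ x in ω, (∑ m ∈ (hfin Λ).toFinset, b m * ψ m x) ^ 2 ∂ν)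
    (hβ : 0 < β) {T α : ℝ} (hT : 0 < T) (hα : 2 * β < α) (S : Finset ℕ) (a : ℕ → ℝ) :
    ∫ t in Ioo 0 T, ∫ x in Ω, exp (-(α * β) / t) * heatSum S a μ ψ t x ^ 2 ∂ν
      ≤ 3 * (∫ t in Ioo 0 T, ∫ x in ω, heatSum S a μ ψ t x ^ 2 ∂ν)
        + 5 * exp (-(α ^ 2 - 2 * α * β) / T)
          * ∫ t in Ioo 0 T, ∫ x in Ω, exp (-(α * β) / t) * heatSum S a μ ψ t x ^ 2 ∂ν := by
  have hαβ : 0 ≤ α * β := by nlinarith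
  have hψω : ∀ k, MemLp (ψ k) 2 (ν.restrict ω) := fun k =>
    (hψ k).mono_measure (Measure.restrict_mono hω le_rfl)
  have hF : IntegrableOn (fun t => ∫ x in Ω, exp (-(α * β) / t) * heatSum S a μ ψ t x ^ 2 ∂ν)
      (Ioo 0 T) := by
    simp only [integral_const_mul]
    exact integrableOn_exp_neg_div_mul hαβ (continuous_integral_heatSum_sq S a μ hψ)
  have hG : IntegrableOn (fun t => ∫ x in ω, heatSum S a μ ψ t x ^ 2 ∂ν) (Ioo 0 T) :=
    (continuous_integral_heatSum_sq S a μ hψω).integrableOn_Icc.mono_set Ioo_subset_Icc_self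
  convert setIntegral_le_of_le_add_comp_div_two hT.le (by positivity) hF hG
    (fun t _ => integral_nonneg fun x => by positivity)
    (fun t ht => integral_weighted_heatSum_sq_le hω hψ horth hfin hspec hβ hα ht.1 ht.2.le S a)
    using 2
  ring

end Spectral

theorem statement15_general (d : ℕ) :
    ∃ Chat : ℝ, 0 < Chat ∧
      ∀ (κ₁ β : ℝ) (Ω ω : Set (EuclideanSpace ℝ (Fin d)))
        (μ : ℕ → ℝ) (ψ : ℕ → EuclideanSpace ℝ (Fin d) → ℝ)
        (hLR : LRHyp Ω ω μ ψ κ₁ ((d : ℝ) / 2) β),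
        ∀ T : ℝ, 0 < T → ∀ α : ℝ, 2 * β < α → ∀ N : ℕ, 1 ≤ N → ∀ a : ℕ → ℝ,
          (∫ t in Set.Ioo (0:ℝ) T, ∫ x in Ω,
              Real.exp (-(α * β) / t) * (PNLR μ ψ hLR.hfin N a t x) ^ 2)
            ≤ 3 * (∫ t in Set.Ioo (0:ℝ) T, ∫ x in ω, (PNLR μ ψ hLR.hfin N a t x) ^ 2)
              + (Chat * ((1 / T + 1)
                    * (T ^ ((d : ℝ) / 2 + 1) * (1 + T ^ ((d : ℝ) / 2 + 1))
                        + α ^ (2 * ((d : ℝ) / 2) + 2)))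
                  / (α ^ 2 - 2 * α * β) ^ (2 * ((d : ℝ) / 2) + 1)
                  * Real.exp (-(α ^ 2 - 2 * α * β) / (2 * T)))
                * ∫ t in Set.Ioo (0:ℝ) T, ∫ x in Ω,
                    Real.exp (-(α * β) / t) * (PNLR μ ψ hLR.hfin N a t x) ^ 2 := by
  refine ⟨5 * 2 ^ (d + 1) * (d + 1).factorial, by positivity, ?_⟩
  intro κ₁ β Ω ω μ ψ hLR T hT α hα N _ a
  have hα0 : 0 < α := by linarith [hLR.hβ]
  have hs : 0 < α ^ 2 - 2 * α * β := by nlinarith [hLR.hβ]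
  have hχ := rpow_two_mul_add_one_le (θ := (d : ℝ) / 2) hT hα0.le
  have hk : 2 * ((d : ℝ) / 2) + 1 = ((d + 1 : ℕ) : ℝ) := by push_cast; ring
  rw [hk, rpow_natCast] at hχ ⊢
  have hgain : 5 * exp (-(α ^ 2 - 2 * α * β) / T) ≤ 5 * 2 ^ (d + 1) * ((d + 1).factorial : ℝ)
      * ((1 / T + 1) * (T ^ ((d : ℝ) / 2 + 1) * (1 + T ^ ((d : ℝ) / 2 + 1))
        + α ^ (2 * ((d : ℝ) / 2) + 2))) / (α ^ 2 - 2 * α * β) ^ (d + 1)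
      * exp (-(α ^ 2 - 2 * α * β) / (2 * T)) := by
    calc 5 * exp (-(α ^ 2 - 2 * α * β) / T)
        ≤ 5 * (2 ^ (d + 1) * (d + 1).factorial * T ^ (d + 1) / (α ^ 2 - 2 * α * β) ^ (d + 1)
            * exp (-(α ^ 2 - 2 * α * β) / (2 * T))) := by
          gcongr; exact exp_neg_div_le_mul_exp_neg_div_two hs hT (d + 1)
      _ = 5 * 2 ^ (d + 1) * (d + 1).factorial * T ^ (d + 1) / (α ^ 2 - 2 * α * β) ^ (d + 1)
            * exp (-(α ^ 2 - 2 * α * β) / (2 * T)) := by ring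
      _ ≤ _ := by gcongr
  have hI0 : 0 ≤ ∫ t in Ioo 0 T, ∫ x in Ω, exp (-(α * β) / t) * PNLR μ ψ hLR.hfin N a t x ^ 2 :=
    integral_nonneg fun t => integral_nonneg fun x => by positivity
  exact (setIntegral_weighted_heatSum_sq_le hLR.hω_sub hLR.hψ_mem hLR.hψ_orth hLR.hfin hLR.hspec
    hLR.hβ hT hα _ a).trans (add_le_add le_rfl (mul_le_mul_of_nonneg_right hgain hI0))

/-- Proposition `Prop_restrictouvertLR` of the paper. -/
theorem statement15 (d : ℕ) (hd : 1 ≤ d) :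
    ∃ Chat : ℝ, 0 < Chat ∧
      ∀ (κ₁ β : ℝ) (Ω ω : Set (EuclideanSpace ℝ (Fin d)))
        (μ : ℕ → ℝ) (ψ : ℕ → EuclideanSpace ℝ (Fin d) → ℝ)
        (hLR : LRHyp Ω ω μ ψ κ₁ ((d : ℝ) / 2) β),
        ∀ T : ℝ, 0 < T → ∀ α : ℝ, 2 * β < α → ∀ N : ℕ, 1 ≤ N → ∀ a : ℕ → ℝ,
          (∫ t in Set.Ioo (0:ℝ) T, ∫ x in Ω,
              Real.exp (-(α * β) / t) * (PNLR μ ψ hLR.hfin N a t x) ^ 2)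
            ≤ 3 * (∫ t in Set.Ioo (0:ℝ) T, ∫ x in ω, (PNLR μ ψ hLR.hfin N a t x) ^ 2)
              + (Chat * ((1 / T + 1)
                    * (T ^ ((d : ℝ) / 2 + 1) * (1 + T ^ ((d : ℝ) / 2 + 1))
                        + α ^ (2 * ((d : ℝ) / 2) + 2)))
                  / (α ^ 2 - 2 * α * β) ^ (2 * ((d : ℝ) / 2) + 1)
                  * Real.exp (-(α ^ 2 - 2 * α * β) / (2 * T)))
                * ∫ t in Set.Ioo (0:ℝ) T, ∫ x in Ω,
                    Real.exp (-(α * β) / t) * (PNLR μ ψ hLR.hfin N a t x) ^ 2 :=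
  statement15_general d
end
end
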